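/- Let G be a finite simple graph with n vertices and m edges, adjacency matrix A, and let d = ⌈2m/n⌉. Then for every vertex u of G, the row sum of A² at the row indexed by u (equivalently, Σ_{v ∈ N(u)} d(v), the sum of the degrees of the neighbors of u) is at most (d−1)·d(u) + d + s(G)/2, where s(G) is the degree deviation of G and d(u) is the degree of u. -/

import Mathlib

open Finset Matrix

/-- The adjacency matrix of a simple graph over `ℝ` is Hermitian. -/
lemma SimpleGraph.isHermitian_adjMatrix' {V : Type*} [Fintype V] (G : SimpleGraph V)
    [DecidableRel G.Adj] : (G.adjMatrix ℝ).IsHermitian := by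
  rw [Matrix.IsHermitian, Matrix.conjTranspose_eq_transpose_of_trivial]
  exact G.isSymm_adjMatrix

/-- The spectral radius of a simple graph: the largest eigenvalue of its adjacency matrix. -/
noncomputable def SimpleGraph.spectralRadius {V : Type*} [Fintype V] [DecidableEq V]
    (G : SimpleGraph V) [DecidableRel G.Adj] : ℝ :=
  ⨆ i, (G.isHermitian_adjMatrix').eigenvalues i

/-- The degree deviation of a simple graph: `s(G) = ∑_v |d(v) - 2m/n|`. -/
noncomputable def SimpleGraph.degreeDeviation {V : Type*} [Fintype V] [DecidableEq V]
    (G : SimpleGraph V) [DecidableRel G.Adj] : ℝ :=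
  ∑ v, |(G.degree v : ℝ) - 2 * (G.edgeFinset.card : ℝ) / (Fintype.card V : ℝ)|

/-!
Write `c = 2m/n` for the average degree and `p(v) = (d(v) - c)⁺`. Since the deviations `d(v) - c`
sum to zero, their positive parts sum to `s(G)/2`. Bounding each neighbour degree by `c + p(v)`
gives `∑_{v ∈ N(u)} d(v) ≤ c·d(u) + s(G)/2 - p(u)`, because `u ∉ N(u)`; and
`c·d(u) - p(u) ≤ (d - 1)·d(u) + d` for every `c ≤ d`.
-/

theorem Finset.sum_posPart_eq_half_sum_abs {ι : Type*} (s : Finset ι) (f : ι → ℝ)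
    (hf : ∑ i ∈ s, f i = 0) : ∑ i ∈ s, (f i)⁺ = (∑ i ∈ s, |f i|) / 2 := by
  have hsub : ∑ i ∈ s, (f i)⁺ - ∑ i ∈ s, (f i)⁻ = 0 := by
    rw [← Finset.sum_sub_distrib]
    simpa only [posPart_sub_negPart] using hf
  have hadd : ∑ i ∈ s, (f i)⁺ + ∑ i ∈ s, (f i)⁻ = ∑ i ∈ s, |f i| := by
    rw [← Finset.sum_add_distrib]
    simp only [posPart_add_negPart]
  linarith

lemma mul_sub_posPart_sub_le {c d k : ℝ} (hcd : c ≤ d) (hk : 0 ≤ k) :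
    c * k - (k - c)⁺ ≤ (d - 1) * k + d := by
  rcases le_total k c with hkc | hck
  · rw [posPart_eq_zero.mpr (sub_nonpos.mpr hkc)]
    nlinarith
  · rw [posPart_eq_self.mpr (sub_nonneg.mpr hck)]
    nlinarith

namespace SimpleGraph

variable {V : Type*} [Fintype V] (G : SimpleGraph V) [DecidableRel G.Adj]

theorem sum_adjMatrix_mul_self_apply {α : Type*} [NonAssocSemiring α] (u : V) :
    ∑ v, (G.adjMatrix α * G.adjMatrix α) u v = ∑ v ∈ G.neighborFinset u, (G.degree v : α) := by
  have hrow : ∀ w, ∑ v, G.adjMatrix α w v = G.degree w := fun w => by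
    simpa [Matrix.mulVec, dotProduct] using G.adjMatrix_mulVec_apply w (1 : V → α)
  simp only [adjMatrix_mul_apply]
  rw [Finset.sum_comm]
  exact Finset.sum_congr rfl fun w _ => hrow w

noncomputable def averageDegree : ℝ :=
  2 * (G.edgeFinset.card : ℝ) / (Fintype.card V : ℝ)

theorem sum_degree_sub_averageDegree [Nonempty V] :
    ∑ v, ((G.degree v : ℝ) - G.averageDegree) = 0 := by
  have hsum : ∑ v, (G.degree v : ℝ) = 2 * (G.edgeFinset.card : ℝ) := by
    exact_mod_cast G.sum_degrees_eq_twice_card_edges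
  have hn : (Fintype.card V : ℝ) ≠ 0 := by positivity
  rw [Finset.sum_sub_distrib, hsum, Finset.sum_const, Finset.card_univ, nsmul_eq_mul,
    averageDegree, mul_div_cancel₀ _ hn, sub_self]

theorem sum_posPart_degree_sub_averageDegree [DecidableEq V] [Nonempty V] :
    ∑ v, ((G.degree v : ℝ) - G.averageDegree)⁺ = G.degreeDeviation / 2 :=
  Finset.sum_posPart_eq_half_sum_abs _ _ G.sum_degree_sub_averageDegree

theorem sum_degree_neighborFinset_add_posPart_le [DecidableEq V] (c : ℝ) (u : V) :
    ∑ v ∈ G.neighborFinset u, (G.degree v : ℝ) + ((G.degree u : ℝ) - c)⁺ ≤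
      c * G.degree u + ∑ v, ((G.degree v : ℝ) - c)⁺ := by
  have hnbr : ∑ v ∈ G.neighborFinset u, (G.degree v : ℝ) ≤
      c * G.degree u + ∑ v ∈ G.neighborFinset u, ((G.degree v : ℝ) - c)⁺ := by
    calc ∑ v ∈ G.neighborFinset u, (G.degree v : ℝ)
        ≤ ∑ v ∈ G.neighborFinset u, (c + ((G.degree v : ℝ) - c)⁺) :=
          Finset.sum_le_sum fun v _ => by linarith [le_posPart ((G.degree v : ℝ) - c)]
      _ = _ := by
          rw [Finset.sum_add_distrib, Finset.sum_const, card_neighborFinset_eq_degree,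
            nsmul_eq_mul, mul_comm]
  have hins : ∑ v ∈ insert u (G.neighborFinset u), ((G.degree v : ℝ) - c)⁺ ≤
      ∑ v, ((G.degree v : ℝ) - c)⁺ :=
    Finset.sum_le_sum_of_subset_of_nonneg (Finset.subset_univ _) fun v _ _ => posPart_nonneg _
  rw [Finset.sum_insert (G.notMem_neighborFinset_self u)] at hins
  linarith

end SimpleGraph

theorem rowSum_sq_adjMatrix_le_general
    {V : Type*} [Fintype V] [DecidableEq V]
    (G : SimpleGraph V) [DecidableRel G.Adj]
    (d : ℕ) (hd : d = ⌈2 * (G.edgeFinset.card : ℝ) / (Fintype.card V : ℝ)⌉₊) (u : V) :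
    (∑ v, (G.adjMatrix ℝ * G.adjMatrix ℝ) u v = ∑ v ∈ G.neighborFinset u, (G.degree v : ℝ)) ∧
    ∑ v, (G.adjMatrix ℝ * G.adjMatrix ℝ) u v ≤
      ((d : ℝ) - 1) * (G.degree u : ℝ) + (d : ℝ) + G.degreeDeviation / 2 := by
  have : Nonempty V := ⟨u⟩
  refine ⟨G.sum_adjMatrix_mul_self_apply u, ?_⟩
  rw [G.sum_adjMatrix_mul_self_apply u, ← G.sum_posPart_degree_sub_averageDegree]
  have hcd : G.averageDegree ≤ d := hd ▸ Nat.le_ceil _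
  linarith [G.sum_degree_neighborFinset_add_posPart_le G.averageDegree u,
    mul_sub_posPart_sub_le hcd (Nat.cast_nonneg (G.degree u))]

/-- For every vertex `u`, the row sum of `A²` at `u` (which equals the sum of the degrees
of the neighbors of `u`) is at most `(d-1)·d(u) + d + s(G)/2`, where `d = ⌈2m/n⌉`. -/
theorem rowSum_sq_adjMatrix_le
    {V : Type*} [Fintype V] [DecidableEq V] [Nonempty V]
    (G : SimpleGraph V) [DecidableRel G.Adj]
    (d : ℕ) (hd : d = ⌈2 * (G.edgeFinset.card : ℝ) / (Fintype.card V : ℝ)⌉₊) (u : V) :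
    (∑ v, (G.adjMatrix ℝ * G.adjMatrix ℝ) u v = ∑ v ∈ G.neighborFinset u, (G.degree v : ℝ)) ∧
    ∑ v, (G.adjMatrix ℝ * G.adjMatrix ℝ) u v ≤
      ((d : ℝ) - 1) * (G.degree u : ℝ) + (d : ℝ) + G.degreeDeviation / 2 :=
  rowSum_sq_adjMatrix_le_general G d hd u
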